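/- arXiv:2211.12203 — 3 statements merged into one kernel-verified Lean document; each statement's English description precedes it below -/
import Mathlib

section
/- Let G be a graph, T ⊆ V(G) a terminal set, and ω : E(G) → ℚ⁺ an edge-weight function. Suppose e is an edge incident to a non-terminal vertex v of degree at least 3 such that ω(e) is at least the sum of the weights of the other edges incident to v. If S is a minimum-weight edge multiway cut for (G,T) containing e, then (S \ {e}) ∪ {f : f incident to v, f ≠ e} is also an edge multiway cut for (G,T) of weight at most that of S. In particular, there exists a minimum-weight edge multiway cut not containing e. -/
/-! After deleting the new cut, the only edge left at `v` is `e`. A trail through an inner vertex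
uses two distinct edges there, so a path between two terminals (neither of which is `v`) avoids
`v` altogether, hence also avoids `e` and survives in `G - S`. Trading `e` for the other edges at
`v` costs nothing because `e` is at least as heavy as all of them together. -/

/-- `S` is an edge multiway cut for `(G, T)`: after deleting the edges of `S`,
no two distinct terminals of `T` lie in the same connected component. -/
def EdgeMultiwayCut {V : Type*} (G : SimpleGraph V) (T : Set V) (S : Set (Sym2 V)) : Prop :=
  ∀ t₁ ∈ T, ∀ t₂ ∈ T, t₁ ≠ t₂ → ¬ (G.deleteEdges S).Reachable t₁ t₂

theorem finsum_mem_union_le {α M : Type*} [AddCommMonoid M] [PartialOrder M]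
    [IsOrderedAddMonoid M] {f : α → M} {s t : Set α} (hs : s.Finite) (ht : t.Finite)
    (hf : ∀ i ∈ s ∩ t, 0 ≤ f i) :
    ∑ᶠ i ∈ s ∪ t, f i ≤ ∑ᶠ i ∈ s, f i + ∑ᶠ i ∈ t, f i := by
  rw [← finsum_mem_union_inter hs ht]
  exact le_add_of_nonneg_right (finsum_mem_induction _ le_rfl (fun _ _ => add_nonneg) hf)

theorem finsum_mem_sdiff_singleton_union_le {α M : Type*} [AddCommMonoid M] [PartialOrder M]
    [IsOrderedAddMonoid M] {f : α → M} {s t : Set α} {a : α} (hs : s.Finite) (ht : t.Finite)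
    (ha : a ∈ s) (hf : ∀ i ∈ t, 0 ≤ f i) (hta : ∑ᶠ i ∈ t, f i ≤ f a) :
    ∑ᶠ i ∈ (s \ {a}) ∪ t, f i ≤ ∑ᶠ i ∈ s, f i :=
  calc ∑ᶠ i ∈ (s \ {a}) ∪ t, f i
      ≤ ∑ᶠ i ∈ s \ {a}, f i + ∑ᶠ i ∈ t, f i :=
        finsum_mem_union_le (hs.subset Set.sdiff_subset) ht fun i hi => hf i hi.2
    _ ≤ ∑ᶠ i ∈ s \ {a}, f i + f a := by gcongr
    _ = ∑ᶠ i ∈ s, f i := by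
        conv_rhs => rw [← Set.insert_sdiff_self_of_mem ha]
        rw [finsum_mem_insert f (Set.notMem_sdiff_of_mem (Set.mem_singleton a))
          (hs.subset Set.sdiff_subset), add_comm]

namespace SimpleGraph

variable {V : Type*} {H : SimpleGraph V}

theorem Walk.IsTrail.edge_notMem_incidenceSet_of_subsingleton {v a b : V} {p : H.Walk a b}
    (hp : p.IsTrail) (hv : (H.incidenceSet v).Subsingleton) (ha : a ≠ v) (hb : b ≠ v) :
    ∀ f ∈ p.edges, f ∉ H.incidenceSet v := by
  classical
  intro f hf hfv
  have hcount : p.edges.countP (v ∈ ·) = 1 := by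
    rw [← List.count_eq_one_of_mem hp.edges_nodup hf, List.count_eq_countP]
    refine List.countP_congr fun g hg => ?_
    simpa using ⟨fun hvg => hv ⟨p.edges_subset_edgeSet hg, hvg⟩ hfv, fun hgf => hgf ▸ hfv.2⟩
  have hodd := (hp.even_countP_edges_iff v).mpr fun _ => ⟨ha.symm, hb.symm⟩
  rw [hcount] at hodd
  exact Nat.not_even_one hodd

theorem Reachable.deleteEdges_incidenceSet_of_subsingleton {v a b : V}
    (hv : (H.incidenceSet v).Subsingleton) (ha : a ≠ v) (hb : b ≠ v) (h : H.Reachable a b) :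
    (H.deleteEdges (H.incidenceSet v)).Reachable a b := by
  classical
  obtain ⟨p⟩ := h
  exact ⟨p.bypass.toDeleteEdges _ <|
    p.bypass_isPath.isTrail.edge_notMem_incidenceSet_of_subsingleton hv ha hb⟩

end SimpleGraph

theorem EdgeMultiwayCut.sdiff_singleton_union_incidenceSet {V : Type*} {G : SimpleGraph V}
    {T : Set V} {S : Set (Sym2 V)} (hS : EdgeMultiwayCut G T S) {v : V} (hvT : v ∉ T)
    {e : Sym2 V} (hve : v ∈ e) :
    EdgeMultiwayCut G T ((S \ {e}) ∪ (G.incidenceSet v \ {e})) := by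
  set H := G.deleteEdges ((S \ {e}) ∪ (G.incidenceSet v \ {e}))
  have hv : (H.incidenceSet v).Subsingleton := by
    have h_eq_e : ∀ f ∈ H.incidenceSet v, f = e := fun f ⟨hfH, hvf⟩ => by
      by_contra hfe
      simp only [H, SimpleGraph.edgeSet_deleteEdges] at hfH
      exact hfH.2 (Or.inr ⟨⟨hfH.1, hvf⟩, hfe⟩)
    exact fun f hf g hg => (h_eq_e f hf).trans (h_eq_e g hg).symm
  have hle : H.deleteEdges (H.incidenceSet v) ≤ G.deleteEdges S := by
    intro x y hxy
    rw [SimpleGraph.deleteEdges_adj] at hxy ⊢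
    obtain ⟨hxyH, hinc⟩ := hxy
    refine ⟨hxyH.1, fun hxyS => hinc ⟨hxyH, ?_⟩⟩
    have hxy_e : s(x, y) = e := by_contra fun hne =>
      ((SimpleGraph.deleteEdges_adj ..).mp hxyH).2 (Or.inl ⟨hxyS, hne⟩)
    exact hxy_e ▸ hve
  intro t₁ ht₁ t₂ ht₂ hne hr
  exact hS t₁ ht₁ t₂ ht₂ hne <| SimpleGraph.Reachable.mono hle <|
    hr.deleteEdges_incidenceSet_of_subsingleton hv (ne_of_mem_of_not_mem ht₁ hvT)
      (ne_of_mem_of_not_mem ht₂ hvT)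

theorem min_weight_cut_avoids_heavy_edge_general {V : Type*} [Fintype V]
    (G : SimpleGraph V) (T : Set V) (ω : Sym2 V → ℚ)
    (hω : ∀ f ∈ G.edgeSet, 0 < ω f)
    (v : V) (hvT : v ∉ T)
    (e : Sym2 V) (he : e ∈ G.incidenceSet v)
    (hwt : ∑ᶠ f ∈ (G.incidenceSet v \ {e}), ω f ≤ ω e)
    (S : Set (Sym2 V)) (hSE : S ⊆ G.edgeSet)
    (hcut : EdgeMultiwayCut G T S)
    (hmin : ∀ S' ⊆ G.edgeSet, EdgeMultiwayCut G T S' → ∑ᶠ f ∈ S, ω f ≤ ∑ᶠ f ∈ S', ω f)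
    (heS : e ∈ S) :
    (EdgeMultiwayCut G T ((S \ {e}) ∪ (G.incidenceSet v \ {e})) ∧
      ∑ᶠ f ∈ ((S \ {e}) ∪ (G.incidenceSet v \ {e})), ω f ≤ ∑ᶠ f ∈ S, ω f) ∧
    ∃ S'' : Set (Sym2 V), S'' ⊆ G.edgeSet ∧ EdgeMultiwayCut G T S'' ∧
      (∀ S' ⊆ G.edgeSet, EdgeMultiwayCut G T S' → ∑ᶠ f ∈ S'', ω f ≤ ∑ᶠ f ∈ S', ω f) ∧
      e ∉ S'' := by
  have hcut' := hcut.sdiff_singleton_union_incidenceSet hvT he.2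
  have hsum := finsum_mem_sdiff_singleton_union_le (Set.toFinite S) (Set.toFinite _) heS
    (fun f hf => (hω f (G.incidenceSet_subset v hf.1)).le) hwt
  refine ⟨⟨hcut', hsum⟩, _, ?_, hcut', fun S' hS' hcutS' => hsum.trans (hmin S' hS' hcutS'), ?_⟩
  · exact Set.union_subset (Set.sdiff_subset.trans hSE)
      (Set.sdiff_subset.trans (G.incidenceSet_subset v))
  · simp

/-- If `e` is an edge incident to a non-terminal vertex `v` of degree at least 3 whose
weight is at least the total weight of the other edges at `v`, and `S` is a minimum-weight
edge multiway cut containing `e`, then replacing `e` by the other edges incident to `v`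
yields an edge multiway cut of no larger weight; in particular some minimum-weight edge
multiway cut avoids `e`. -/
theorem min_weight_cut_avoids_heavy_edge {V : Type*} [Fintype V]
    (G : SimpleGraph V) (T : Set V) (ω : Sym2 V → ℚ)
    (hω : ∀ f ∈ G.edgeSet, 0 < ω f)
    (v : V) (hvT : v ∉ T) (hdeg : 3 ≤ (G.neighborSet v).ncard)
    (e : Sym2 V) (he : e ∈ G.incidenceSet v)
    (hwt : ∑ᶠ f ∈ (G.incidenceSet v \ {e}), ω f ≤ ω e)
    (S : Set (Sym2 V)) (hSE : S ⊆ G.edgeSet)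
    (hcut : EdgeMultiwayCut G T S)
    (hmin : ∀ S' ⊆ G.edgeSet, EdgeMultiwayCut G T S' → ∑ᶠ f ∈ S, ω f ≤ ∑ᶠ f ∈ S', ω f)
    (heS : e ∈ S) :
    (EdgeMultiwayCut G T ((S \ {e}) ∪ (G.incidenceSet v \ {e})) ∧
      ∑ᶠ f ∈ ((S \ {e}) ∪ (G.incidenceSet v \ {e})), ω f ≤ ∑ᶠ f ∈ S, ω f) ∧
    ∃ S'' : Set (Sym2 V), S'' ⊆ G.edgeSet ∧ EdgeMultiwayCut G T S'' ∧
      (∀ S' ⊆ G.edgeSet, EdgeMultiwayCut G T S' → ∑ᶠ f ∈ S'', ω f ≤ ∑ᶠ f ∈ S', ω f) ∧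
      e ∉ S'' :=
  min_weight_cut_avoids_heavy_edge_general G T ω hω v hvT e he hwt S hSE hcut hmin heS
end

section
/- Let G be a graph, T ⊆ V(G), and let G' be the 2-subdivision of G. Let L be the line graph of G'. For each terminal t ∈ T, the edges of G' incident to t form a clique in L; pick one vertex from each such clique to form the terminal set T_L of L. Then (G,T) has an edge multiway cut of size at most k if and only if (L, T_L) has a node multiway cut S ⊆ V(L) \ T_L of size at most k. -/
/-- `S` is a node multiway cut for `(G, T)` (disjointness of `S` from `T` is stated
separately): every walk between two distinct terminals outside `S` meets `S`. -/
def NodeMultiwayCutPred {V : Type*} (G : SimpleGraph V) (T S : Set V) : Prop :=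
  ∀ t₁ ∈ T, ∀ t₂ ∈ T, t₁ ≠ t₂ → t₁ ∉ S → t₂ ∉ S →
    ∀ p : G.Walk t₁ t₂, ∃ v ∈ p.support, v ∈ S

/-- The 2-subdivision of `G`, with new internal vertices indexed by darts. -/
def twoSubdivision {V : Type*} (G : SimpleGraph V) : SimpleGraph (V ⊕ G.Dart) :=
  SimpleGraph.fromRel (fun a b =>
    match a, b with
    | Sum.inl u, Sum.inr d => d.toProd.1 = u
    | Sum.inr d, Sum.inr d' => d' = d.symm
    | _, _ => False)

open SimpleGraph Sum

namespace MWCAux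

variable {V : Type*} {G : SimpleGraph V}

lemma adj_ll (u v : V) : ¬ (twoSubdivision G).Adj (inl u) (inl v) := by
  simp [twoSubdivision]

lemma adj_lr (u : V) (d : G.Dart) : (twoSubdivision G).Adj (inl u) (inr d) ↔ d.toProd.1 = u := by
  simp [twoSubdivision]

lemma adj_rr (d d' : G.Dart) : (twoSubdivision G).Adj (inr d) (inr d') ↔ d' = d.symm := by
  simp only [twoSubdivision, fromRel_adj]
  constructor
  · rintro ⟨hne, h | h⟩
    · exact h
    · subst h; exact (Dart.symm_symm d').symm
  · rintro rfl
    refine ⟨?_, Or.inl rfl⟩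
    simp only [Ne, inr.injEq]
    exact fun h => (Dart.symm_ne d) h.symm

/-- middle edge of the subdivision of the edge of a dart -/
def mid (d : G.Dart) : Sym2 (V ⊕ G.Dart) := s(inr d, inr d.symm)

lemma mid_mem (d : G.Dart) : mid d ∈ (twoSubdivision G).edgeSet := by
  rw [mid, SimpleGraph.mem_edgeSet, adj_rr]

lemma mid_symm (d : G.Dart) : mid d.symm = mid d := by
  rw [mid, mid, Dart.symm_symm, Sym2.eq_swap]

/-- projection used for the "forward" direction: subdivision vertex goes to tail -/
def qmap : V ⊕ G.Dart → V := Sum.elim id (fun d => d.toProd.1)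

/-- projection used for the "backward" direction: subdivision vertex goes to head -/
def pmap : V ⊕ G.Dart → V := Sum.elim id (fun d => d.toProd.2)

lemma pmap_mid (d : G.Dart) : Sym2.map pmap (mid d) = d.edge := by
  simp only [mid, Sym2.map_pair_eq, pmap, Sum.elim_inr, Dart.edge]
  exact Sym2.eq_swap.trans rfl

/-- structure of edges containing an original vertex -/
lemma inl_mem_edge {t : V} {e : Sym2 (V ⊕ G.Dart)} (he : e ∈ (twoSubdivision G).edgeSet)
    (ht : (inl t : V ⊕ G.Dart) ∈ e) : ∃ d : G.Dart, e = s(inl t, inr d) := by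
  induction e with
  | _ x y =>
    rw [SimpleGraph.mem_edgeSet] at he
    rcases Sym2.mem_iff.mp ht with h | h
    · subst h
      match y, he with
      | inl v, he => exact absurd he (adj_ll _ _)
      | inr d, _ => exact ⟨d, rfl⟩
    · subst h
      match x, he with
      | inl v, he => exact absurd he (adj_ll _ _)
      | inr d, he =>
        exact ⟨d, Sym2.eq_swap⟩

lemma inl_not_mem_mid (t : V) (d : G.Dart) : (inl t : V ⊕ G.Dart) ∉ mid d := by
  rw [mid, Sym2.mem_iff]
  rintro (h | h) <;> exact absurd h (by simp)

/-- within an edge not in M, both endpoints are reachable after deleting M -/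
lemma edge_reach {M : Set (Sym2 (V ⊕ G.Dart))} {e : Sym2 (V ⊕ G.Dart)}
    (he : e ∈ (twoSubdivision G).edgeSet) (heM : e ∉ M) {x y : V ⊕ G.Dart}
    (hx : x ∈ e) (hy : y ∈ e) :
    ((twoSubdivision G).deleteEdges M).Reachable x y := by
  induction e with
  | _ a b =>
    rw [SimpleGraph.mem_edgeSet] at he
    have hadj : ((twoSubdivision G).deleteEdges M).Adj a b := by
      rw [SimpleGraph.deleteEdges_adj]; exact ⟨he, heM⟩
    rcases Sym2.mem_iff.mp hx with rfl | rfl <;> rcases Sym2.mem_iff.mp hy with rfl | rfl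
    · exact Reachable.refl _
    · exact hadj.reachable
    · exact hadj.symm.reachable
    · exact Reachable.refl _

/-- a walk in the line graph avoiding M yields reachability in G' minus M -/
lemma lineWalk_reach {M : Set (Sym2 (V ⊕ G.Dart))}
    {e f : (twoSubdivision G).edgeSet}
    (w : (twoSubdivision G).lineGraph.Walk e f)
    (hw : ∀ v ∈ w.support, (v : Sym2 (V ⊕ G.Dart)) ∉ M)
    {x y : V ⊕ G.Dart} (hx : x ∈ (e : Sym2 (V ⊕ G.Dart))) (hy : y ∈ (f : Sym2 (V ⊕ G.Dart))) :
    ((twoSubdivision G).deleteEdges M).Reachable x y := by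
  induction w generalizing x with
  | @nil g =>
    exact edge_reach g.2 (hw g (by simp)) hx hy
  | @cons e e' f' h p ih =>
    obtain ⟨hne, z, hz1, hz2⟩ := (SimpleGraph.lineGraph_adj_iff_exists).mp h
    have h1 : ((twoSubdivision G).deleteEdges M).Reachable x z :=
      edge_reach e.2 (hw e (by simp)) hx hz1
    have h2 := ih (fun v hv => hw v (by simp [hv])) hz2 hy
    exact h1.trans h2

/-- projecting a walk in G' minus M down to G minus S -/
lemma subdiv_walk_proj {S : Set (Sym2 V)} {M : Set (Sym2 (V ⊕ G.Dart))}
    (hM : ∀ d : G.Dart, d.edge ∈ S → mid d ∈ M)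
    {x y : V ⊕ G.Dart} (w : ((twoSubdivision G).deleteEdges M).Walk x y) :
    (G.deleteEdges S).Reachable (qmap x) (qmap y) := by
  induction w with
  | nil => exact Reachable.refl _
  | @cons a c b h p ih =>
    rw [SimpleGraph.deleteEdges_adj] at h
    obtain ⟨hadj, hne⟩ := h
    match a, c, hadj, hne with
    | inl u, inl v, hadj, _ => exact absurd hadj (adj_ll _ _)
    | inl u, inr d, hadj, _ =>
      have : qmap (inl u : V ⊕ G.Dart) = qmap (inr d : V ⊕ G.Dart) := by
        simp [qmap, (adj_lr u d).mp hadj]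
      rw [this]; exact ih
    | inr d, inl u, hadj, _ =>
      have : qmap (inr d : V ⊕ G.Dart) = qmap (inl u : V ⊕ G.Dart) := by
        simp [qmap, (adj_lr u d).mp hadj.symm]
      rw [this]; exact ih
    | inr d, inr d', hadj, hne =>
      have hd' : d' = d.symm := (adj_rr d d').mp hadj
      subst hd'
      have hS : d.edge ∉ S := fun hs => hne (hM d hs)
      have hstep : (G.deleteEdges S).Adj (qmap (inr d : V ⊕ G.Dart)) (qmap (inr d.symm : V ⊕ G.Dart)) := by
        rw [SimpleGraph.deleteEdges_adj]
        refine ⟨d.adj, ?_⟩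
        simpa [qmap, Dart.edge] using hS
      exact hstep.reachable.trans ih

/-- two edges sharing a vertex are joined by a short walk in the line graph -/
lemma star_walk (e f : (twoSubdivision G).edgeSet) {x : V ⊕ G.Dart}
    (he : x ∈ (e : Sym2 (V ⊕ G.Dart))) (hf : x ∈ (f : Sym2 (V ⊕ G.Dart))) :
    ∃ q : (twoSubdivision G).lineGraph.Walk e f, ∀ v ∈ q.support, v = e ∨ v = f := by
  by_cases h : e = f
  · subst h
    exact ⟨Walk.nil, by simp⟩
  · refine ⟨Walk.cons (SimpleGraph.lineGraph_adj_iff_exists.mpr ⟨h, x, he, hf⟩) Walk.nil, ?_⟩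
    intro v hv
    simpa using hv

lemma lift_walk {S : Set (Sym2 V)} {SL : Set ((twoSubdivision G).edgeSet)}
    (hSL : ∀ ed ∈ SL, Sym2.map pmap (ed : Sym2 (V ⊕ G.Dart)) ∈ S)
    {a b : V} (w : (G.deleteEdges S).Walk a b)
    (e f : (twoSubdivision G).edgeSet)
    (he : (inl a : V ⊕ G.Dart) ∈ (e : Sym2 (V ⊕ G.Dart)))
    (hf : (inl b : V ⊕ G.Dart) ∈ (f : Sym2 (V ⊕ G.Dart)))
    (heS : e ∉ SL) (hfS : f ∉ SL) :
    ∃ q : (twoSubdivision G).lineGraph.Walk e f, ∀ v ∈ q.support, v ∉ SL := by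
  induction w generalizing e with
  | nil =>
    obtain ⟨q, hq⟩ := star_walk e f he hf
    exact ⟨q, fun v hv => by rcases hq v hv with rfl | rfl <;> assumption⟩
  | @cons a c b h p ih =>
    rw [SimpleGraph.deleteEdges_adj] at h
    obtain ⟨hadj, hns⟩ := h
    set d : G.Dart := ⟨(a, c), hadj⟩ with hd
    have he₁ : (twoSubdivision G).Adj (inl a) (inr d) := (adj_lr a d).mpr rfl
    have he₂ : (twoSubdivision G).Adj (inr d) (inr d.symm) := (adj_rr d d.symm).mpr rfl
    have he₃ : (twoSubdivision G).Adj (inl c) (inr d.symm) := (adj_lr c d.symm).mpr rfl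
    let e₁ : (twoSubdivision G).edgeSet := ⟨s(inl a, inr d), he₁⟩
    let e₂ : (twoSubdivision G).edgeSet := ⟨s(inr d, inr d.symm), he₂⟩
    let e₃ : (twoSubdivision G).edgeSet := ⟨s(inl c, inr d.symm), he₃⟩
    have hmap1 : Sym2.map pmap (e₁ : Sym2 (V ⊕ G.Dart)) = s(a, c) := by
      simp [e₁, pmap, Sym2.map_pair_eq, hd]
    have hmap2 : Sym2.map pmap (e₂ : Sym2 (V ⊕ G.Dart)) = s(a, c) := by
      simp only [e₂, Sym2.map_pair_eq, pmap, Sum.elim_inr]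
      rw [Sym2.eq_swap]; simp [hd, Dart.symm]
    have hmap3 : Sym2.map pmap (e₃ : Sym2 (V ⊕ G.Dart)) = s(a, c) := by
      simp only [e₃, Sym2.map_pair_eq, pmap, Sum.elim_inr, Sum.elim_inl]
      rw [Sym2.eq_swap]; simp [hd, Dart.symm]
    have h₁S : e₁ ∉ SL := fun hs => hns (hmap1 ▸ hSL e₁ hs)
    have h₂S : e₂ ∉ SL := fun hs => hns (hmap2 ▸ hSL e₂ hs)
    have h₃S : e₃ ∉ SL := fun hs => hns (hmap3 ▸ hSL e₃ hs)
    obtain ⟨q₀, hq₀⟩ := star_walk e e₁ he (Sym2.mem_mk_left _ _)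
    have a₁ : (twoSubdivision G).lineGraph.Adj e₁ e₂ := by
      refine SimpleGraph.lineGraph_adj_iff_exists.mpr ⟨?_, inr d, by simp [e₁], by simp [e₂]⟩
      intro hcon
      have : (inl a : V ⊕ G.Dart) ∈ (e₂ : Sym2 (V ⊕ G.Dart)) := by
        rw [← hcon]; simp [e₁]
      simp [e₂] at this
    have a₂ : (twoSubdivision G).lineGraph.Adj e₂ e₃ := by
      refine SimpleGraph.lineGraph_adj_iff_exists.mpr ⟨?_, inr d.symm, by simp [e₂], by simp [e₃]⟩
      intro hcon
      have : (inl c : V ⊕ G.Dart) ∈ (e₂ : Sym2 (V ⊕ G.Dart)) := by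
        rw [hcon]; simp [e₃]
      simp [e₂] at this
    obtain ⟨q', hq'⟩ := ih e₃ (Sym2.mem_mk_left _ _) hf h₃S
    refine ⟨q₀.append (Walk.cons a₁ (Walk.cons a₂ q')), ?_⟩
    intro v hv
    rw [Walk.support_append, List.mem_append] at hv
    rcases hv with hv | hv
    · rcases hq₀ v hv with rfl | rfl <;> assumption
    · rw [Walk.support_cons, Walk.support_cons] at hv
      simp only [List.tail_cons, List.mem_cons] at hv
      rcases hv with rfl | hv
      · exact h₂S
      · exact hq' v hv

lemma finite_dart [Finite V] : Finite G.Dart :=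
  Finite.of_injective (fun d => d.toProd) (fun d d' h => SimpleGraph.Dart.ext d d' h)

end MWCAux

open MWCAux in
/-- Let `G'` be the 2-subdivision of `G` and `L` its line graph.  For each terminal
`t ∈ T` pick (via `τ`) one edge of `G'` incident to `t`, forming the terminal set `T_L`
of `L`.  Then `(G, T)` has an edge multiway cut of size at most `k` iff `(L, T_L)` has a
node multiway cut `S ⊆ V(L) \ T_L` of size at most `k`. -/
theorem edge_multiway_cut_iff_node_multiway_cut_lineGraph {V : Type*} [Fintype V]
    (G : SimpleGraph V) (T : Set V) (k : ℕ)
    (τ : V → (twoSubdivision G).edgeSet)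
    (hτ : ∀ t ∈ T, (Sum.inl t : V ⊕ G.Dart) ∈ ((τ t : Sym2 (V ⊕ G.Dart)))) :
    (∃ S : Set (Sym2 V), EdgeMultiwayCut G T S ∧ S.ncard ≤ k) ↔
    (∃ SL : Set ((twoSubdivision G).edgeSet), SL.ncard ≤ k ∧
      (∀ t ∈ T, τ t ∉ SL) ∧
      NodeMultiwayCutPred ((twoSubdivision G).lineGraph) {x | ∃ t ∈ T, x = τ t} SL) := by
  haveI : Finite G.Dart := finite_dart
  constructor
  · rintro ⟨S, hcut, hk⟩
    set M : Set (Sym2 (V ⊕ G.Dart)) := {x | ∃ d : G.Dart, d.edge ∈ S ∧ x = mid d} with hMdef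
    refine ⟨{e : (twoSubdivision G).edgeSet | (e : Sym2 (V ⊕ G.Dart)) ∈ M}, ?_, ?_, ?_⟩
    · -- cardinality bound
      have him : Subtype.val '' {e : (twoSubdivision G).edgeSet | (e : Sym2 (V ⊕ G.Dart)) ∈ M} = M := by
        ext x
        constructor
        · rintro ⟨e, he, rfl⟩; exact he
        · intro hx
          rcases hx with ⟨d, hd, rfl⟩
          exact ⟨⟨mid d, mid_mem d⟩, show (mid d) ∈ M from ⟨d, hd, rfl⟩, rfl⟩
      have h1 : ({e : (twoSubdivision G).edgeSet | (e : Sym2 (V ⊕ G.Dart)) ∈ M}).ncard = M.ncard :=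
        calc ({e : (twoSubdivision G).edgeSet | (e : Sym2 (V ⊕ G.Dart)) ∈ M}).ncard
            = (Subtype.val '' {e : (twoSubdivision G).edgeSet | (e : Sym2 (V ⊕ G.Dart)) ∈ M}).ncard :=
              (Set.ncard_image_of_injective _ Subtype.val_injective).symm
          _ = M.ncard := by rw [him]
      have hinj : Set.InjOn (Sym2.map pmap) M := by
        rintro x ⟨d, hd, rfl⟩ y ⟨d', hd', rfl⟩ hxy
        rw [pmap_mid, pmap_mid] at hxy
        rcases (SimpleGraph.dart_edge_eq_iff d d').mp hxy with rfl | h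
        · rfl
        · rw [h, mid_symm]
      have hsub : Sym2.map pmap '' M ⊆ S := by
        rintro x ⟨y, ⟨d, hd, rfl⟩, rfl⟩
        rw [pmap_mid]; exact hd
      have h2 : M.ncard = (Sym2.map pmap '' M).ncard := (Set.ncard_image_of_injOn hinj).symm
      calc ({e : (twoSubdivision G).edgeSet | (e : Sym2 (V ⊕ G.Dart)) ∈ M}).ncard
          = M.ncard := h1
        _ = (Sym2.map pmap '' M).ncard := h2
        _ ≤ S.ncard := Set.ncard_le_ncard hsub S.toFinite
        _ ≤ k := hk
    · -- terminals not in SL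
      intro t ht hmem
      simp only [Set.mem_setOf_eq, hMdef] at hmem
      obtain ⟨d, _, hd⟩ := hmem
      exact inl_not_mem_mid t d (hd ▸ hτ t ht)
    · -- node multiway cut predicate
      rintro x₁ ⟨t₁, ht₁, rfl⟩ x₂ ⟨t₂, ht₂, rfl⟩ hne h1 h2 p
      by_contra hcon
      push_neg at hcon
      have hreach := lineWalk_reach p (fun v hv => hcon v hv) (hτ t₁ ht₁) (hτ t₂ ht₂)
      obtain ⟨w⟩ := hreach
      have hproj := subdiv_walk_proj (S := S) (M := M) (fun d hd => show (mid d) ∈ M from ⟨d, hd, rfl⟩) w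
      have ht : t₁ ≠ t₂ := fun h => hne (by rw [h])
      exact hcut t₁ ht₁ t₂ ht₂ ht hproj
  · rintro ⟨SL, hk, hdis, hcut⟩
    refine ⟨Sym2.map pmap '' (Subtype.val '' SL), ?_, ?_⟩
    · -- edge multiway cut
      intro t₁ ht₁ t₂ ht₂ hne hr
      obtain ⟨w⟩ := hr
      have hSL : ∀ ed ∈ SL, Sym2.map pmap (ed : Sym2 (V ⊕ G.Dart)) ∈
          Sym2.map pmap '' (Subtype.val '' SL) :=
        fun ed hed => ⟨(ed : Sym2 (V ⊕ G.Dart)), ⟨ed, hed, rfl⟩, rfl⟩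
      obtain ⟨q, hq⟩ := lift_walk hSL w (τ t₁) (τ t₂) (hτ t₁ ht₁) (hτ t₂ ht₂)
        (hdis t₁ ht₁) (hdis t₂ ht₂)
      have hneτ : τ t₁ ≠ τ t₂ := by
        intro h
        obtain ⟨d, hd⟩ := inl_mem_edge (τ t₁).2 (hτ t₁ ht₁)
        have hm : (inl t₂ : V ⊕ G.Dart) ∈ ((τ t₁ : Sym2 (V ⊕ G.Dart))) := by
          rw [h]; exact hτ t₂ ht₂
        rw [hd] at hm
        rcases Sym2.mem_iff.mp hm with h' | h'
        · exact hne (inl.injEq t₂ t₁ ▸ h').symm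
        · simp at h'
      obtain ⟨v, hv, hvS⟩ := hcut (τ t₁) ⟨t₁, ht₁, rfl⟩ (τ t₂) ⟨t₂, ht₂, rfl⟩ hneτ
        (hdis t₁ ht₁) (hdis t₂ ht₂) q
      exact hq v hv hvS
    · calc (Sym2.map pmap '' (Subtype.val '' SL)).ncard
          ≤ (Subtype.val '' SL).ncard := Set.ncard_image_le (SL.toFinite.image _)
        _ ≤ SL.ncard := le_of_eq (Set.ncard_image_of_injective _ Subtype.val_injective)
        _ ≤ k := hk
end

section
/- Let Φ be a CNF formula in which every clause has at most 3 literals and every variable occurs exactly twice positively and once negatively. In the gadget graph G constructed from Φ (with a diamond-and-hat variable gadget per variable and a triangle-chain clause gadget per clause, connected by link-structures, and 2n + 2m terminals), if Φ is satisfiable then (G,T) has an edge multiway cut of weight at most 7n + 2m, where n is the number of variables and m the number of clauses. -/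
/-- Vertices of the gadget graph built from a 2P1N-3SAT formula with variables
`Fin n` and clauses `Fin m` of sizes `size j ∈ {2,3}`:
* `varT i b` : the positive (`b = true`) and negative (`b = false`) terminal of the
  variable gadget of `xᵢ`;
* `clT j b`  : the two terminals of the clause gadget of `cⱼ`;
* `gv i k`   : the three non-link, non-terminal vertices of the variable gadget of `xᵢ`
  (`k = 0`: the diamond vertex attached to the positive terminal; `k = 1`: the shared
  vertex of the diamond and the hat; `k = 2`: the hat vertex attached to the negative
  terminal);
* `link i k` : the three links of the variable gadget of `xᵢ` (`k = 0, 1`: diamond links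
  for the two positive occurrences, `k = 2`: hat link for the negative occurrence),
  identified with the corresponding clause links;
* `chain j p`: the `size j + 1` non-link, non-terminal vertices of the chain of
  `size j` triangles of the clause gadget of `cⱼ`. -/
inductive GadgetVtx (n m : ℕ) (size : Fin m → ℕ) where
  | varT : Fin n → Bool → GadgetVtx n m size
  | clT : Fin m → Bool → GadgetVtx n m size
  | gv : Fin n → Fin 3 → GadgetVtx n m size
  | link : Fin n → Fin 3 → GadgetVtx n m size
  | chain : (j : Fin m) → Fin (size j + 1) → GadgetVtx n m size

/-- Directed edge weights of the gadget graph (each edge is recorded in one direction;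
the weight `0` means "no edge").  `occ` is the bijection matching the `p`-th literal
slot of clause `j` with an occurrence slot `(i, k)` of variable `xᵢ` (`k = 0, 1`
positive occurrences, `k = 2` the negative occurrence).  Terminal edges have weight 3,
clause-triangle bases weight 2, and all other gadget edges (variable bases and
connector edges) weight 1. -/
def gadgetWeight (n m : ℕ) (size : Fin m → ℕ)
    (occ : (Σ j : Fin m, Fin (size j)) ≃ (Fin n × Fin 3)) :
    GadgetVtx n m size → GadgetVtx n m size → ℚ
  | GadgetVtx.varT i true, GadgetVtx.gv i' k => if i = i' ∧ k = 0 then 3 else 0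
  | GadgetVtx.varT i false, GadgetVtx.gv i' k => if i = i' ∧ k = 2 then 3 else 0
  | GadgetVtx.gv i k, GadgetVtx.gv i' k' =>
      if i = i' ∧ ((k = 0 ∧ k' = 1) ∨ (k = 1 ∧ k' = 2)) then 1 else 0
  | GadgetVtx.gv i k, GadgetVtx.link i' k' =>
      if i = i' ∧ (((k = 0 ∨ k = 1) ∧ (k' = 0 ∨ k' = 1)) ∨ ((k = 1 ∨ k = 2) ∧ k' = 2))
        then 1 else 0
  | GadgetVtx.clT j true, GadgetVtx.chain j' p => if j = j' ∧ p.val = 0 then 3 else 0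
  | GadgetVtx.clT j false, GadgetVtx.chain j' p => if j = j' ∧ p.val = size j' then 3 else 0
  | GadgetVtx.chain j p, GadgetVtx.chain j' q =>
      if j = j' ∧ q.val = p.val + 1 then 2 else 0
  | GadgetVtx.chain j q, GadgetVtx.link i k =>
      if ∃ p : Fin (size j), occ ⟨j, p⟩ = (i, k) ∧ (q.val = p.val ∨ q.val = p.val + 1)
        then 1 else 0
  | _, _ => 0

/-- The gadget graph: there is an edge exactly where `gadgetWeight` is nonzero. -/
def gadgetGraph (n m : ℕ) (size : Fin m → ℕ)
    (occ : (Σ j : Fin m, Fin (size j)) ≃ (Fin n × Fin 3)) :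
    SimpleGraph (GadgetVtx n m size) :=
  SimpleGraph.fromRel (fun a b => gadgetWeight n m size occ a b ≠ 0)

/-- The (symmetric) weight of an unordered edge of the gadget graph. -/
def gadgetOmega (n m : ℕ) (size : Fin m → ℕ)
    (occ : (Σ j : Fin m, Fin (size j)) ≃ (Fin n × Fin 3)) :
    Sym2 (GadgetVtx n m size) → ℚ :=
  Sym2.lift ⟨fun a b => gadgetWeight n m size occ a b + gadgetWeight n m size occ b a,
    fun a b => add_comm _ _⟩

/-- The `2n + 2m` terminals of the gadget graph. -/
def gadgetTerminals (n m : ℕ) (size : Fin m → ℕ) : Set (GadgetVtx n m size) :=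
  {x | (∃ i b, x = GadgetVtx.varT i b) ∨ (∃ j b, x = GadgetVtx.clT j b)}

theorem EdgeMultiwayCut.of_labelling {V β : Type*} {G : SimpleGraph V} {T : Set V}
    {S : Set (Sym2 V)} (f : V → β) (hf : ∀ a b, G.Adj a b → s(a, b) ∉ S → f a = f b)
    (hT : Set.InjOn f T) : EdgeMultiwayCut G T S := by
  have walk_label : ∀ {u v} (p : (G.deleteEdges S).Walk u v), f u = f v := by
    intro u v p
    induction p with
    | nil => rfl
    | cons h _ ih =>
      rw [SimpleGraph.deleteEdges_adj] at h
      exact (hf _ _ h.1 h.2).trans ih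
  exact fun t₁ ht₁ t₂ ht₂ hne ⟨p⟩ => hne (hT ht₁ ht₂ (walk_label p))

theorem finsum_mem_range_le_sum {ι α M : Type*} [Fintype ι] [AddCommMonoid M] [PartialOrder M]
    [IsOrderedAddMonoid M] (e : ι → α) (w : α → M) (hw : ∀ i, 0 ≤ w (e i)) :
    ∑ᶠ a ∈ Set.range e, w a ≤ ∑ i, w (e i) := by
  classical
  rw [← Set.image_univ, ← Finset.coe_univ, ← Finset.coe_image, finsum_mem_coe_finset]
  exact Finset.sum_image_le_of_nonneg (by simpa using hw)

namespace GadgetVtx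

variable {n m : ℕ} {size : Fin m → ℕ}
  (occ : (Σ j : Fin m, Fin (size j)) ≃ (Fin n × Fin 3)) (A : Fin n → Bool)

def IsTrueOccurrence (ik : Fin n × Fin 3) : Prop :=
  (A ik.1 = true ∧ ik.2 ≠ 2) ∨ (A ik.1 = false ∧ ik.2 = 2)

instance : DecidablePred (IsTrueOccurrence A) :=
  fun _ => inferInstanceAs (Decidable (_ ∨ _))

def connector (i : Fin n) (k : Fin 3) (up : Bool) : Sym2 (GadgetVtx n m size) :=
  s(chain (occ.symm (i, k)).1
    (if up then (occ.symm (i, k)).2.succ else (occ.symm (i, k)).2.castSucc), link i k)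

def varCutEdge (i : Fin n) : Fin 7 → Sym2 (GadgetVtx n m size) :=
  if A i then
    ![s(gv i 1, gv i 2), s(gv i 1, link i 2), s(gv i 2, link i 2),
      connector occ i 0 false, connector occ i 0 true,
      connector occ i 1 false, connector occ i 1 true]
  else
    ![s(gv i 0, gv i 1), s(gv i 0, link i 0), s(gv i 0, link i 1),
      s(gv i 1, link i 0), s(gv i 1, link i 1),
      connector occ i 2 false, connector occ i 2 true]

def cutEdge (P : ∀ j : Fin m, Fin (size j)) :
    (Fin n × Fin 7) ⊕ Fin m → Sym2 (GadgetVtx n m size)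
  | .inl (i, t) => varCutEdge occ A i t
  | .inr j => s(chain j (P j).castSucc, chain j (P j).succ)

def terminalOf (P : ∀ j : Fin m, Fin (size j)) : GadgetVtx n m size → GadgetVtx n m size
  | varT i b => varT i b
  | clT j b => clT j b
  | gv i k => varT i (if k = 0 then true else if k = 1 then A i else false)
  | link i k =>
      if IsTrueOccurrence A (i, k) then varT i (A i)
      else
        let jp := occ.symm (i, k)
        clT jp.1 (decide (jp.2.val ≤ (P jp.1).val))
  | chain j q => clT j (decide (q.val ≤ (P j).val))

lemma gadgetOmega_mk (a b : GadgetVtx n m size) :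
    gadgetOmega n m size occ s(a, b) =
      gadgetWeight n m size occ a b + gadgetWeight n m size occ b a :=
  rfl

lemma gadgetWeight_self (a : GadgetVtx n m size) : gadgetWeight n m size occ a a = 0 := by
  cases a with
  | gv i k => fin_cases k <;> simp [gadgetWeight]
  | _ => simp [gadgetWeight]

lemma mem_edgeSet_of_gadgetOmega_ne_zero {e : Sym2 (GadgetVtx n m size)}
    (he : gadgetOmega n m size occ e ≠ 0) : e ∈ (gadgetGraph n m size occ).edgeSet := by
  induction e using Sym2.ind with
  | _ a b =>
    rw [gadgetOmega_mk] at he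
    rw [SimpleGraph.mem_edgeSet, gadgetGraph, SimpleGraph.fromRel_adj]
    refine ⟨fun hab => ?_, ?_⟩
    · subst hab
      simp [gadgetWeight_self] at he
    · by_contra! h
      simp [h.1, h.2] at he

lemma gadgetOmega_connector (i : Fin n) (k : Fin 3) (up : Bool) :
    gadgetOmega n m size occ (connector occ i k up) = 1 := by
  have hocc : occ ⟨(occ.symm (i, k)).1, (occ.symm (i, k)).2⟩ = (i, k) := by simp
  cases up <;> simp [connector, gadgetOmega_mk, gadgetWeight] <;> exact ⟨_, hocc, by simp⟩

variable (P : ∀ j : Fin m, Fin (size j))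

lemma gadgetOmega_cutEdge (x : (Fin n × Fin 7) ⊕ Fin m) :
    gadgetOmega n m size occ (cutEdge occ A P x) = Sum.elim (fun _ => 1) (fun _ => 2) x := by
  rcases x with ⟨i, t⟩ | j
  · cases hAi : A i <;> fin_cases t <;>
      simp [cutEdge, varCutEdge, hAi, gadgetOmega_connector, gadgetOmega_mk, gadgetWeight]
  · simp [cutEdge, gadgetOmega_mk, gadgetWeight, add_assoc]

lemma gadgetOmega_cutEdge_pos (x : (Fin n × Fin 7) ⊕ Fin m) :
    0 < gadgetOmega n m size occ (cutEdge occ A P x) := by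
  rw [gadgetOmega_cutEdge]
  cases x <;> norm_num

lemma cutEdge_mem_edgeSet (x : (Fin n × Fin 7) ⊕ Fin m) :
    cutEdge occ A P x ∈ (gadgetGraph n m size occ).edgeSet :=
  mem_edgeSet_of_gadgetOmega_ne_zero occ (gadgetOmega_cutEdge_pos occ A P x).ne'

lemma sum_gadgetOmega_cutEdge :
    ∑ x, gadgetOmega n m size occ (cutEdge occ A P x) = 7 * (n : ℚ) + 2 * (m : ℚ) := by
  simp only [gadgetOmega_cutEdge, Fintype.sum_sum_type, Sum.elim_inl, Sum.elim_inr,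
    Finset.sum_const, Finset.card_univ, Fintype.card_prod, Fintype.card_fin, nsmul_eq_mul,
    Nat.cast_mul, Nat.cast_ofNat, mul_one]
  ring

section Labelling

variable {occ A P}

lemma terminalOf_gv_eq_gv {i : Fin n} {k k' : Fin 3} (h : (k = 0 ∧ k' = 1) ∨ (k = 1 ∧ k' = 2))
    (hS : s(gv i k, gv i k') ∉ Set.range (cutEdge occ A P)) :
    terminalOf occ A P (gv i k) = terminalOf occ A P (gv i k') := by
  have hcut : ∀ t, varCutEdge occ A i t ≠ s(gv i k, gv i k') :=
    fun t ht => hS ⟨.inl (i, t), ht⟩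
  -- the edge lies in the cut hat (`A i`) or cut diamond (`¬ A i`), or stays on one side
  rcases h with ⟨rfl, rfl⟩ | ⟨rfl, rfl⟩ <;> cases hAi : A i <;>
    simp_all [Fin.forall_fin_succ, varCutEdge, terminalOf]

lemma terminalOf_gv_eq_link {i : Fin n} {k k' : Fin 3}
    (h : ((k = 0 ∨ k = 1) ∧ (k' = 0 ∨ k' = 1)) ∨ ((k = 1 ∨ k = 2) ∧ k' = 2))
    (hS : s(gv i k, link i k') ∉ Set.range (cutEdge occ A P)) :
    terminalOf occ A P (gv i k) = terminalOf occ A P (link i k') := by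
  have hcut : ∀ t, varCutEdge occ A i t ≠ s(gv i k, link i k') :=
    fun t ht => hS ⟨.inl (i, t), ht⟩
  rcases h with ⟨hk | hk, hk' | hk'⟩ | ⟨hk | hk, hk'⟩ <;> subst hk hk' <;>
    cases hAi : A i <;>
    simp_all [Fin.forall_fin_succ, varCutEdge, terminalOf, IsTrueOccurrence]

lemma connector_mem_range_cutEdge {i : Fin n} {k : Fin 3} (h : IsTrueOccurrence A (i, k))
    (up : Bool) : connector occ i k up ∈ Set.range (cutEdge occ A P) := by
  rcases h with ⟨hAi, hk⟩ | ⟨hAi, rfl⟩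
  · fin_cases k
    · exact ⟨.inl (i, if up then 4 else 3), by cases up <;> simp [cutEdge, varCutEdge, hAi]⟩
    · exact ⟨.inl (i, if up then 6 else 5), by cases up <;> simp [cutEdge, varCutEdge, hAi]⟩
    · exact absurd rfl hk
  · exact ⟨.inl (i, if up then 6 else 5), by cases up <;> simp [cutEdge, varCutEdge, hAi]⟩

lemma terminalOf_chain_eq_link (hP : ∀ j, IsTrueOccurrence A (occ ⟨j, P j⟩))
    {j : Fin m} {p : Fin (size j)} {q : Fin (size j + 1)} {i : Fin n} {k : Fin 3}
    (hp : occ ⟨j, p⟩ = (i, k)) (hq : q.val = p.val ∨ q.val = p.val + 1)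
    (hS : s(chain j q, link i k) ∉ Set.range (cutEdge occ A P)) :
    terminalOf occ A P (chain j q) = terminalOf occ A P (link i k) := by
  have hsymm : occ.symm (i, k) = ⟨j, p⟩ := by rw [← hp, Equiv.symm_apply_apply]
  by_cases htrue : IsTrueOccurrence A (i, k)
  · refine absurd ?_ hS
    convert connector_mem_range_cutEdge htrue (decide (q.val = p.val + 1)) using 1
    rw [connector, hsymm]
    rcases hq with hq | hq <;> simp [Fin.ext_iff, hq]
  · have hpP : p.val ≠ (P j).val := fun h => htrue (hp ▸ Fin.ext h ▸ hP j)
    simp only [terminalOf, if_neg htrue]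
    rw [hsymm]
    simp only [clT.injEq, true_and, decide_eq_decide]
    omega

lemma terminalOf_chain_eq_chain {j : Fin m} {q q' : Fin (size j + 1)}
    (hq : q'.val = q.val + 1) (hS : s(chain j q, chain j q') ∉ Set.range (cutEdge occ A P)) :
    terminalOf occ A P (chain j q) = terminalOf occ A P (chain j q') := by
  have hbase : q.val ≠ (P j).val := fun h =>
    hS ⟨.inr j, by simp [cutEdge, Fin.ext_iff, Fin.val_succ, h, hq]⟩
  simp only [terminalOf, clT.injEq, true_and, decide_eq_decide]
  omega

lemma terminalOf_eq_of_gadgetWeight_ne_zero (hP : ∀ j, IsTrueOccurrence A (occ ⟨j, P j⟩))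
    {a b : GadgetVtx n m size} (hw : gadgetWeight n m size occ a b ≠ 0)
    (hS : s(a, b) ∉ Set.range (cutEdge occ A P)) :
    terminalOf occ A P a = terminalOf occ A P b := by
  cases a with
  | varT i c =>
    cases b <;> cases c <;> simp only [gadgetWeight, ne_eq, ite_eq_right_iff] at hw <;>
      simp_all [terminalOf]
  | clT j c =>
    cases b <;> cases c <;> simp only [gadgetWeight, ne_eq, ite_eq_right_iff, not_forall] at hw
    case chain.false j' q =>
      obtain ⟨⟨rfl, hq⟩, -⟩ := hw
      have := (P j).isLt
      simp only [terminalOf, clT.injEq, true_and, false_eq_decide_iff, not_le]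
      omega
    case chain.true j' q => obtain ⟨⟨rfl, hq⟩, -⟩ := hw; simp [terminalOf, hq]
    all_goals simp at hw
  | gv i k =>
    cases b <;> simp only [gadgetWeight, ne_eq, ite_eq_right_iff, not_forall] at hw
    case gv i' k' => obtain ⟨⟨rfl, h⟩, -⟩ := hw; exact terminalOf_gv_eq_gv h hS
    case link i' k' => obtain ⟨⟨rfl, h⟩, -⟩ := hw; exact terminalOf_gv_eq_link h hS
    all_goals simp at hw
  | link i k => cases b <;> simp [gadgetWeight] at hw
  | chain j q =>
    cases b <;> simp only [gadgetWeight, ne_eq, ite_eq_right_iff, not_forall] at hw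
    case chain j' q' => obtain ⟨⟨rfl, h⟩, -⟩ := hw; exact terminalOf_chain_eq_chain h hS
    case link i k =>
      obtain ⟨⟨p, hp, hq⟩, -⟩ := hw
      exact terminalOf_chain_eq_link hP hp hq hS
    all_goals simp at hw

lemma terminalOf_eq_of_adj (hP : ∀ j, IsTrueOccurrence A (occ ⟨j, P j⟩))
    {a b : GadgetVtx n m size} (hab : (gadgetGraph n m size occ).Adj a b)
    (hS : s(a, b) ∉ Set.range (cutEdge occ A P)) :
    terminalOf occ A P a = terminalOf occ A P b := by
  rcases (SimpleGraph.fromRel_adj _ a b).1 hab |>.2 with hw | hw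
  · exact terminalOf_eq_of_gadgetWeight_ne_zero hP hw hS
  · exact (terminalOf_eq_of_gadgetWeight_ne_zero hP hw (by rwa [Sym2.eq_swap])).symm

lemma terminalOf_of_mem_gadgetTerminals {t : GadgetVtx n m size}
    (ht : t ∈ gadgetTerminals n m size) : terminalOf occ A P t = t := by
  rcases ht with ⟨i, b, rfl⟩ | ⟨j, b, rfl⟩ <;> rfl

lemma injOn_terminalOf : Set.InjOn (terminalOf occ A P) (gadgetTerminals n m size) :=
  fun _ ha _ hb h => by
    rwa [terminalOf_of_mem_gadgetTerminals ha, terminalOf_of_mem_gadgetTerminals hb] at h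

end Labelling

end GadgetVtx

theorem satisfiable_implies_cut_of_weight_7n_2m_general (n m : ℕ) (size : Fin m → ℕ)
    (occ : (Σ j : Fin m, Fin (size j)) ≃ (Fin n × Fin 3))
    (A : Fin n → Bool)
    (hA : ∀ j : Fin m, ∃ p : Fin (size j),
      (A (occ ⟨j, p⟩).1 = true ∧ (occ ⟨j, p⟩).2 ≠ 2) ∨
      (A (occ ⟨j, p⟩).1 = false ∧ (occ ⟨j, p⟩).2 = 2)) :
    ∃ S : Set (Sym2 (GadgetVtx n m size)),
      S ⊆ (gadgetGraph n m size occ).edgeSet ∧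
      EdgeMultiwayCut (gadgetGraph n m size occ) (gadgetTerminals n m size) S ∧
      ∑ᶠ e ∈ S, gadgetOmega n m size occ e ≤ 7 * (n : ℚ) + 2 * (m : ℚ) := by
  choose P hP using hA
  refine ⟨Set.range (GadgetVtx.cutEdge occ A P),
    Set.range_subset_iff.2 (GadgetVtx.cutEdge_mem_edgeSet occ A P), ?_, ?_⟩
  · exact EdgeMultiwayCut.of_labelling (GadgetVtx.terminalOf occ A P)
      (fun _ _ hab hS => GadgetVtx.terminalOf_eq_of_adj hP hab hS)
      GadgetVtx.injOn_terminalOf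
  · calc ∑ᶠ e ∈ Set.range (GadgetVtx.cutEdge occ A P), gadgetOmega n m size occ e
        ≤ ∑ x, gadgetOmega n m size occ (GadgetVtx.cutEdge occ A P x) :=
          finsum_mem_range_le_sum _ _ fun x => (GadgetVtx.gadgetOmega_cutEdge_pos occ A P x).le
      _ = 7 * (n : ℚ) + 2 * (m : ℚ) := GadgetVtx.sum_gadgetOmega_cutEdge occ A P

/-- If the 2P1N-3SAT formula (clauses of size 2 or 3, each variable occurring twice
positively and once negatively, encoded by the slot bijection `occ`) is satisfied by the
assignment `A`, then the gadget graph has an edge multiway cut of weight at most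
`7n + 2m`. -/
theorem satisfiable_implies_cut_of_weight_7n_2m (n m : ℕ) (size : Fin m → ℕ)
    (hsize : ∀ j, 2 ≤ size j ∧ size j ≤ 3)
    (occ : (Σ j : Fin m, Fin (size j)) ≃ (Fin n × Fin 3))
    (A : Fin n → Bool)
    (hA : ∀ j : Fin m, ∃ p : Fin (size j),
      (A (occ ⟨j, p⟩).1 = true ∧ (occ ⟨j, p⟩).2 ≠ 2) ∨
      (A (occ ⟨j, p⟩).1 = false ∧ (occ ⟨j, p⟩).2 = 2)) :
    ∃ S : Set (Sym2 (GadgetVtx n m size)),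
      S ⊆ (gadgetGraph n m size occ).edgeSet ∧
      EdgeMultiwayCut (gadgetGraph n m size occ) (gadgetTerminals n m size) S ∧
      ∑ᶠ e ∈ S, gadgetOmega n m size occ e ≤ 7 * (n : ℚ) + 2 * (m : ℚ) :=
  satisfiable_implies_cut_of_weight_7n_2m_general n m size occ A hA
end
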